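/- Let V be a finite set with Laplacian Δ and carré du champ Γ as above. If f : V → ℝ satisfies 1 + f(y) − f(x) ≥ 0 for all y with q(x,y) > 0, and if Γf attains its maximum over V at x, then ΔΓf(x) + 2Γ(f, Γf)(x) ≤ 0. -/

import Mathlib

open Finset Real

/-- Graph Laplacian on a finite weighted graph. -/
noncomputable def glap {V : Type*} [Fintype V] (q : V → V → ℝ) (f : V → ℝ) (x : V) : ℝ :=
  ∑ y, q x y * (f y - f x)

/-- Carré du champ operator Γ(f,g). -/
noncomputable def gGammaBil {V : Type*} [Fintype V] (q : V → V → ℝ) (f g : V → ℝ) (x : V) : ℝ :=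
  (1 / 2) * ∑ y, q x y * (f y - f x) * (g y - g x)

/-- Carré du champ Γf = Γ(f,f). -/
noncomputable def gGamma {V : Type*} [Fintype V] (q : V → V → ℝ) (f : V → ℝ) (x : V) : ℝ :=
  gGammaBil q f f x

/-- Iterated carré du champ Γ₂f = (ΔΓf − 2Γ(f,Δf))/2. -/
noncomputable def gGammaTwo {V : Type*} [Fintype V] (q : V → V → ℝ) (f : V → ℝ) (x : V) : ℝ :=
  (glap q (gGamma q f) x - 2 * gGammaBil q f (glap q f) x) / 2

theorem glap_add_two_gGammaBil_eq_sum {V : Type*} [Fintype V] (q : V → V → ℝ) (f g : V → ℝ)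
    (x : V) :
    glap q g x + 2 * gGammaBil q f g x = ∑ y, q x y * (g y - g x) * (1 + f y - f x) := by
  simp only [glap, gGammaBil, mul_sum, ← sum_add_distrib]
  exact sum_congr rfl fun y _ => by ring

theorem glap_add_two_gGammaBil_nonpos_of_forall_le {V : Type*} [Fintype V] (q : V → V → ℝ)
    (f g : V → ℝ) (x : V) (hq : ∀ y, 0 ≤ q x y) (hgrad : ∀ y, 0 < q x y → 0 ≤ 1 + f y - f x)
    (hmax : ∀ y, g y ≤ g x) :
    glap q g x + 2 * gGammaBil q f g x ≤ 0 := by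
  rw [glap_add_two_gGammaBil_eq_sum]
  refine sum_nonpos fun y _ => ?_
  rcases (hq y).eq_or_lt with hzero | hpos
  · simp [← hzero]
  · exact mul_nonpos_of_nonpos_of_nonneg
      (mul_nonpos_of_nonneg_of_nonpos hpos.le (sub_nonpos.mpr (hmax y))) (hgrad y hpos)

theorem lap_gamma_add_two_gamma_nonpos {V : Type*} [Fintype V] (q : V → V → ℝ)
    (hq : ∀ x y, 0 ≤ q x y) (f : V → ℝ) (x : V)
    (hgrad : ∀ y, 0 < q x y → 0 ≤ 1 + f y - f x)
    (hmax : ∀ y, gGamma q f y ≤ gGamma q f x) :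
    glap q (gGamma q f) x + 2 * gGammaBil q f (gGamma q f) x ≤ 0 :=
  glap_add_two_gGammaBil_nonpos_of_forall_le q f (gGamma q f) x (hq x) hgrad hmax
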